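/- The matrix R̂ = PR built from the Jordanian R-matrix satisfies the braid equation R̂₁₂ R̂₂₃ R̂₁₂ = R̂₂₃ R̂₁₂ R̂₂₃ as 8×8 matrices. -/
import Mathlib


open Matrix
open scoped Kronecker
open Matrix

/-- The Jordanian R-matrix, indexed by pairs `(i,j), (k,l) ∈ {1,2}²`
in the lexicographic order `(1,1),(1,2),(2,1),(2,2)`. -/
noncomputable def JordanianR {R : Type*} [CommRing R] (h g : R) :
    Matrix (Fin 2 × Fin 2) (Fin 2 × Fin 2) R :=
  Matrix.of fun p q =>
    if p = q then 1
    else if p = ((0 : Fin 2), (0 : Fin 2)) ∧ q = ((0 : Fin 2), (1 : Fin 2)) then -h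
    else if p = ((0 : Fin 2), (0 : Fin 2)) ∧ q = ((1 : Fin 2), (0 : Fin 2)) then h
    else if p = ((0 : Fin 2), (0 : Fin 2)) ∧ q = ((1 : Fin 2), (1 : Fin 2)) then g * h
    else if p = ((0 : Fin 2), (1 : Fin 2)) ∧ q = ((1 : Fin 2), (1 : Fin 2)) then -g
    else if p = ((1 : Fin 2), (0 : Fin 2)) ∧ q = ((1 : Fin 2), (1 : Fin 2)) then g
    else 0

/-- The flip (permutation) matrix `P_{ij,kl} = δ_{il} δ_{jk}`. -/
noncomputable def flipP {R : Type*} [CommRing R] :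
    Matrix (Fin 2 × Fin 2) (Fin 2 × Fin 2) R :=
  Matrix.of fun p q => if p.1 = q.2 ∧ p.2 = q.1 then 1 else 0

/-- `R̂₁₂ = R̂ ⊗ I` acting on `(ℂ²)^⊗3`. -/
noncomputable def Rhat12 {R : Type*} [CommRing R] (h g : R) :
    Matrix ((Fin 2 × Fin 2) × Fin 2) ((Fin 2 × Fin 2) × Fin 2) R :=
  (flipP * JordanianR h g) ⊗ₖ (1 : Matrix (Fin 2) (Fin 2) R)

/-- `R̂₂₃ = I ⊗ R̂` acting on `(ℂ²)^⊗3`, reindexed to the same index type. -/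
noncomputable def Rhat23 {R : Type*} [CommRing R] (h g : R) :
    Matrix ((Fin 2 × Fin 2) × Fin 2) ((Fin 2 × Fin 2) × Fin 2) R :=
  Matrix.reindex (Equiv.prodAssoc (Fin 2) (Fin 2) (Fin 2)).symm
    (Equiv.prodAssoc (Fin 2) (Fin 2) (Fin 2)).symm
    ((1 : Matrix (Fin 2) (Fin 2) R) ⊗ₖ (flipP * JordanianR h g))

/-- Explicit entries of `P·R`. -/
noncomputable def Qent {R : Type*} [CommRing R] (h g : R) :
    Fin 2 → Fin 2 → Fin 2 → Fin 2 → R :=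
  ![![![![1,-h],![h,g*h]], ![![0,0],![1,g]]],
    ![![![0,1],![0,-g]], ![![0,0],![0,1]]]]

lemma flipP_mul_J {R : Type*} [CommRing R] (h g : R) :
    flipP * JordanianR h g =
      Matrix.of (fun p q => Qent h g p.1 p.2 q.1 q.2) := by
  ext ⟨a,b⟩ ⟨c,d⟩
  fin_cases a <;> fin_cases b <;> fin_cases c <;> fin_cases d <;>
    simp [flipP, JordanianR, Qent, Matrix.mul_apply, Fintype.sum_prod_type,
      Fin.sum_univ_two, Prod.ext_iff]

lemma r12_apply {R : Type*} [CommRing R] (h g : R)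
    (a b c d e f : Fin 2) :
    Rhat12 h g ((a,b),c) ((d,e),f) = Qent h g a b d e * (if c = f then 1 else 0) := by
  simp [Rhat12, flipP_mul_J, Matrix.one_apply]

lemma r23_apply {R : Type*} [CommRing R] (h g : R)
    (a b c d e f : Fin 2) :
    Rhat23 h g ((a,b),c) ((d,e),f) = (if a = d then 1 else 0) * Qent h g b c e f := by
  simp [Rhat23, flipP_mul_J, Matrix.one_apply]

set_option maxHeartbeats 2000000 in
/-- `R̂ = P R` satisfies the braid equation `R̂₁₂ R̂₂₃ R̂₁₂ = R̂₂₃ R̂₁₂ R̂₂₃`. -/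
theorem jordanianRhat_braid {R : Type*} [CommRing R] (h g : R) :
    Rhat12 h g * Rhat23 h g * Rhat12 h g = Rhat23 h g * Rhat12 h g * Rhat23 h g := by
  ext ⟨⟨a,b⟩,c⟩ ⟨⟨d,e⟩,f⟩
  simp only [Matrix.mul_apply, Fintype.sum_prod_type, Fin.sum_univ_two,
    r12_apply, r23_apply]
  fin_cases a <;> fin_cases b <;> fin_cases c <;> fin_cases d <;> fin_cases e <;> fin_cases f <;>
    · simp only [Qent, Matrix.cons_val', Matrix.cons_val_zero, Matrix.cons_val_one,
        Matrix.head_cons, Matrix.head_fin_const, if_true, Fin.zero_eta, Fin.mk_one,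
        if_false, Fin.one_eq_zero_iff, Fin.zero_eq_one_iff, Nat.succ_ne_self,
        one_ne_zero, zero_ne_one, ite_true, ite_false, reduceCtorEq]
      ring
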